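/- Let H be a Hopf algebra and A a right H-comodule algebra such that B = A^{coH} ⊆ A is a Hopf–Galois extension. Then the subspace (A⊗A)^{coH} of coinvariants of A⊗A for the diagonal coaction equals the subspace C = {a⊗ã ∈ A⊗A : a₍₀₎ ⊗ τ(a₍₁₎)·ã = a ⊗ ã ⊗_B 1_A}. -/
import Mathlib


open TensorProduct

set_option maxHeartbeats 1000000
set_option synthInstance.maxHeartbeats 400000

noncomputable section

variable {k A H : Type*} [Field k] [Ring A] [Algebra k A]
  [Ring H] [HopfAlgebra k H]

/-- The set of coinvariant elements of `A` for the coaction `δ`. -/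
def coinv (δ : A →ₐ[k] A ⊗[k] H) : Set A := {a | δ a = a ⊗ₜ[k] 1}

/-- The submodule of `A ⊗[k] A` generated by the `B`-balancing relations, where
`B = coinv δ` is the subalgebra of coinvariants. -/
def relSub (δ : A →ₐ[k] A ⊗[k] H) : Submodule k (A ⊗[k] A) :=
  Submodule.span k
    {z | ∃ x y b, b ∈ coinv δ ∧ z = (x * b) ⊗ₜ[k] y - x ⊗ₜ[k] (b * y)}

/-- The balanced tensor product `A ⊗_B A` over the coinvariant subalgebra. -/
abbrev QB (δ : A →ₐ[k] A ⊗[k] H) := (A ⊗[k] A) ⧸ relSub δ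

/-- The canonical Galois map `A ⊗ A → A ⊗ H`, `a' ⊗ a ↦ a' a₍₀₎ ⊗ a₍₁₎`,
before descending to `A ⊗_B A`. -/
def canMap (δ : A →ₐ[k] A ⊗[k] H) : A ⊗[k] A →ₗ[k] A ⊗[k] H :=
  (LinearMap.rTensor H (LinearMap.mul' k A)) ∘ₗ
    ((TensorProduct.assoc k A A H).symm.toLinearMap) ∘ₗ
      (LinearMap.lTensor A δ.toLinearMap)

/-- `δ` is a counital and coassociative coaction (so `A` is an `H`-comodule algebra). -/
def IsCoaction (δ : A →ₐ[k] A ⊗[k] H) : Prop :=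
  (∀ a : A,
    (TensorProduct.rid k A)
      ((LinearMap.lTensor A (Coalgebra.counit (R := k) (A := H))) (δ a)) = a) ∧
  (∀ a : A,
    (TensorProduct.assoc k A H H)
      ((LinearMap.rTensor H δ.toLinearMap) (δ a)) =
    (LinearMap.lTensor A (Coalgebra.comul (R := k) (A := H))) (δ a))

/-- The translation map `τ = χ⁻¹(1 ⊗ -) : H → A ⊗_B A`. -/
def tauMap (δ : A →ₐ[k] A ⊗[k] H) (χ : QB δ ≃ₗ[k] A ⊗[k] H) :
    H →ₗ[k] QB δ :=
  χ.symm.toLinearMap ∘ₗ (TensorProduct.mk k A H 1)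


/-- The diagonal coaction of `H` on `A ⊗ A`: `a ⊗ ã ↦ a₍₀₎ ⊗ ã₍₀₎ ⊗ a₍₁₎ã₍₁₎`. -/
def diagCoact (δ : A →ₐ[k] A ⊗[k] H) :
    A ⊗[k] A →ₗ[k] (A ⊗[k] A) ⊗[k] H :=
  (LinearMap.lTensor (A ⊗[k] A) (LinearMap.mul' k H)) ∘ₗ
    (TensorProduct.tensorTensorTensorComm k A H A H).toLinearMap ∘ₗ
      (TensorProduct.map δ.toLinearMap δ.toLinearMap)


lemma aux_canMap_mul (x : A) (w v : A ⊗[k] H) :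
    (LinearMap.rTensor H (LinearMap.mul' k A))
      ((TensorProduct.assoc k A A H).symm (x ⊗ₜ[k] (w * v))) =
    (LinearMap.rTensor H (LinearMap.mul' k A))
      ((TensorProduct.assoc k A A H).symm (x ⊗ₜ[k] w)) * v := by
  induction w using TensorProduct.induction_on with
  | zero => simp only [zero_mul, tmul_zero, map_zero]
  | tmul a h =>
    induction v using TensorProduct.induction_on with
    | zero => simp only [mul_zero, tmul_zero, map_zero]
    | tmul b g =>
      simp [Algebra.TensorProduct.tmul_mul_tmul, TensorProduct.assoc_symm_tmul,
        LinearMap.rTensor_tmul, LinearMap.mul'_apply, mul_assoc]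
    | add v₁ v₂ h₁ h₂ => simp only [mul_add, tmul_add, map_add, h₁, h₂]
  | add w₁ w₂ h₁ h₂ => simp only [add_mul, tmul_add, map_add, h₁, h₂]

lemma chi_ract (δ : A →ₐ[k] A ⊗[k] H)
    (χ : QB δ ≃ₗ[k] A ⊗[k] H)
    (hχ : ∀ z : A ⊗[k] A, χ (Submodule.Quotient.mk z) = canMap δ z)
    (ract : A →ₗ[k] QB δ →ₗ[k] QB δ)
    (hract : ∀ y x u : A,
      ract y (Submodule.Quotient.mk (x ⊗ₜ[k] u)) =
        Submodule.Quotient.mk (x ⊗ₜ[k] (u * y)))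
    (b' : A) (q : QB δ) :
    χ (ract b' q) = χ q * δ b' := by
  obtain ⟨z, rfl⟩ := Submodule.Quotient.mk_surjective _ q
  induction z using TensorProduct.induction_on with
  | zero =>
    rw [show (Submodule.Quotient.mk (0 : A ⊗[k] A) : QB δ) = 0 from rfl]
    simp
  | tmul x u =>
    rw [hract, hχ, hχ]
    simp only [canMap, LinearMap.comp_apply, LinearMap.lTensor_tmul,
      AlgHom.toLinearMap_apply, map_mul, LinearEquiv.coe_coe]
    exact aux_canMap_mul x (δ u) (δ b')
  | add z₁ z₂ h₁ h₂ =>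
    rw [show (Submodule.Quotient.mk (z₁ + z₂) : QB δ) =
      Submodule.Quotient.mk z₁ + Submodule.Quotient.mk z₂ from rfl]
    simp only [map_add, h₁, h₂, add_mul]

/-- the coinvariants `(A ⊗ A)^{coH}` of the diagonal coaction coincide
with `C = {a ⊗ ã : a₍₀₎ ⊗ τ(a₍₁₎)·ã = a ⊗ (ã ⊗_B 1)}`.  Here `ract` is the right
`A`-action on `A ⊗_B A` (characterized by `hract`), and the condition defining `C`
is expressed by applying `δ` to the first leg and then contracting `H` against the
translation map acted on by the second leg. -/
theorem diagonal_coinvariants_eq_translation_condition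
    (δ : A →ₐ[k] A ⊗[k] H) (hδ : IsCoaction δ)
    (χ : QB δ ≃ₗ[k] A ⊗[k] H)
    (hχ : ∀ z : A ⊗[k] A, χ (Submodule.Quotient.mk z) = canMap δ z)
    (ract : A →ₗ[k] QB δ →ₗ[k] QB δ)
    (hract : ∀ y x u : A,
      ract y (Submodule.Quotient.mk (x ⊗ₜ[k] u)) =
        Submodule.Quotient.mk (x ⊗ₜ[k] (u * y))) :
    {z : A ⊗[k] A | diagCoact δ z = z ⊗ₜ[k] (1 : H)} =
    {z : A ⊗[k] A |
      ((LinearMap.lTensor A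
          (TensorProduct.lift (ract.flip ∘ₗ tauMap δ χ))) ∘ₗ
        (TensorProduct.assoc k A H A).toLinearMap ∘ₗ
          (LinearMap.rTensor A δ.toLinearMap)) z =
      (LinearMap.lTensor A
        ((relSub δ).mkQ ∘ₗ ((TensorProduct.mk k A A).flip 1))) z} := by
  have key : ∀ (b' : A) (w : A ⊗[k] H),
      (LinearEquiv.lTensor A χ)
        ((LinearMap.lTensor A (TensorProduct.lift (ract.flip ∘ₗ tauMap δ χ)))
          ((TensorProduct.assoc k A H A) (w ⊗ₜ[k] b'))) =
      (TensorProduct.assoc k A A H)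
        ((LinearMap.lTensor (A ⊗[k] A) (LinearMap.mul' k H))
          ((TensorProduct.tensorTensorTensorComm k A H A H) (w ⊗ₜ[k] δ b'))) := by
    intro b' w
    induction w using TensorProduct.induction_on with
    | zero => simp
    | tmul a' h =>
      have h1 : (LinearEquiv.lTensor A χ)
          ((LinearMap.lTensor A (TensorProduct.lift (ract.flip ∘ₗ tauMap δ χ)))
            ((TensorProduct.assoc k A H A) ((a' ⊗ₜ[k] h) ⊗ₜ[k] b'))) =
          a' ⊗ₜ[k] ((1 : A) ⊗ₜ[k] h * δ b') := by
        simp only [TensorProduct.assoc_tmul, LinearMap.lTensor_tmul,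
          TensorProduct.lift.tmul, LinearMap.coe_comp, Function.comp_apply,
          LinearMap.flip_apply, LinearEquiv.lTensor_tmul]
        congr 1
        rw [chi_ract δ χ hχ ract hract]
        congr 1
        simp [tauMap, TensorProduct.mk_apply]
      rw [h1]
      induction δ b' using TensorProduct.induction_on with
      | zero => simp
      | tmul b g =>
        simp [TensorProduct.tensorTensorTensorComm_tmul,
          Algebra.TensorProduct.tmul_mul_tmul, LinearMap.mul'_apply]
      | add v₁ v₂ hv₁ hv₂ =>
        simp only [mul_add, tmul_add, map_add, hv₁, hv₂]
    | add w₁ w₂ h₁ h₂ =>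
      simp only [add_tmul, map_add, h₁, h₂]
  have hG : ∀ z : A ⊗[k] A,
      (LinearEquiv.lTensor A χ)
        ((LinearMap.lTensor A
          ((relSub δ).mkQ ∘ₗ ((TensorProduct.mk k A A).flip 1))) z) =
      (TensorProduct.assoc k A A H) (z ⊗ₜ[k] (1 : H)) := by
    intro z
    induction z using TensorProduct.induction_on with
    | zero => simp
    | tmul a b' =>
      simp only [LinearMap.lTensor_tmul, LinearMap.coe_comp, Function.comp_apply,
        LinearMap.flip_apply, TensorProduct.mk_apply, Submodule.mkQ_apply,
        LinearEquiv.lTensor_tmul, TensorProduct.assoc_tmul]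
      rw [hχ]
      congr 1
      simp [canMap, map_one δ, TensorProduct.assoc_symm_tmul,
        LinearMap.mul'_apply, Algebra.TensorProduct.one_def]
    | add z₁ z₂ h₁ h₂ =>
      simp only [add_tmul, map_add, h₁, h₂]
  have hF : ∀ z : A ⊗[k] A,
      (LinearEquiv.lTensor A χ)
        (((LinearMap.lTensor A
            (TensorProduct.lift (ract.flip ∘ₗ tauMap δ χ))) ∘ₗ
          (TensorProduct.assoc k A H A).toLinearMap ∘ₗ
            (LinearMap.rTensor A δ.toLinearMap)) z) =
      (TensorProduct.assoc k A A H) (diagCoact δ z) := by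
    intro z
    induction z using TensorProduct.induction_on with
    | zero => simp
    | tmul a b' =>
      have := key b' (δ a)
      simp only [LinearMap.coe_comp, Function.comp_apply, LinearMap.rTensor_tmul,
        AlgHom.toLinearMap_apply, LinearEquiv.coe_coe, diagCoact,
        TensorProduct.map_tmul]
      exact this
    | add z₁ z₂ h₁ h₂ =>
      simp only [map_add, h₁, h₂]
  ext z
  simp only [Set.mem_setOf_eq]
  rw [← (TensorProduct.assoc k A A H).injective.eq_iff, ← hF z, ← hG z]
  exact (LinearEquiv.lTensor A χ).injective.eq_iff
end
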